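/- Let A be a real n×m matrix, let t ≥ 1 be a natural number, and let 0 ≤ u ≤ w be constants such that u‖x‖₂ ≤ ‖Ax‖₂ ≤ w‖x‖₂ for every x ∈ ℝ^m with ‖x‖₀ ≤ 2t. Then for all z₁, z₂ ∈ ℝ^m with ‖z₁‖₀ ≤ t, ‖z₂‖₀ ≤ t and disjoint supports (no index i with (z₁)_i ≠ 0 and (z₂)_i ≠ 0), one has |⟨Az₁, Az₂⟩| ≤ ((w² − u²)/2) ‖z₁‖₂ ‖z₂‖₂. -/

import Mathlib

/-- The number of nonzero entries of a vector (the "l0-norm"). -/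
noncomputable def l0norm {m : ℕ} (x : Fin m → ℝ) : ℕ :=
  (Finset.univ.filter (fun i => x i ≠ 0)).card

/-- The Euclidean norm of a vector in `ℝ^k`. -/
noncomputable def l2norm {k : ℕ} (x : Fin k → ℝ) : ℝ :=
  Real.sqrt (∑ i, (x i) ^ 2)

/-!
Polarization: for orthonormal `x, y` the vectors `x ± y` both have squared norm `2`, so the
restricted bounds put `‖T (x ± y)‖²` in `[2u², 2w²]`, and `4 ⟪T x, T y⟫` is their difference.
Disjointly supported `t`-sparse vectors are orthogonal and every combination of them is
`2t`-sparse, so the bound applies after normalizing.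
-/

open scoped RealInnerProductSpace

section RestrictedOrthogonality

variable {E F : Type*} [NormedAddCommGroup E] [InnerProductSpace ℝ E]
  [NormedAddCommGroup F] [InnerProductSpace ℝ F]

theorem abs_inner_map_le_of_orthonormal (T : E →ₗ[ℝ] F) {u w : ℝ} (hu : 0 ≤ u) {x y : E}
    (hx : ‖x‖ = 1) (hy : ‖y‖ = 1) (hxy : ⟪x, y⟫ = 0)
    (hT : ∀ v ∈ ({x + y, x - y} : Set E), u * ‖v‖ ≤ ‖T v‖ ∧ ‖T v‖ ≤ w * ‖v‖) :
    |⟪T x, T y⟫| ≤ (w ^ 2 - u ^ 2) / 2 := by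
  have hadd : ‖x + y‖ ^ 2 = 2 := by rw [norm_add_sq_real, hx, hy, hxy]; norm_num
  have hsub : ‖x - y‖ ^ 2 = 2 := by rw [norm_sub_sq_real, hx, hy, hxy]; norm_num
  have polarization : 4 * ⟪T x, T y⟫ = ‖T (x + y)‖ ^ 2 - ‖T (x - y)‖ ^ 2 := by
    rw [map_add, map_sub, norm_add_sq_real, norm_sub_sq_real]; ring
  have hsq (v : E) (hv : v ∈ ({x + y, x - y} : Set E)) :
      u ^ 2 * ‖v‖ ^ 2 ≤ ‖T v‖ ^ 2 ∧ ‖T v‖ ^ 2 ≤ w ^ 2 * ‖v‖ ^ 2 := by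
    obtain ⟨hlo, hhi⟩ := hT v hv
    rw [← mul_pow, ← mul_pow]
    exact ⟨pow_le_pow_left₀ (by positivity) hlo 2, pow_le_pow_left₀ (norm_nonneg _) hhi 2⟩
  obtain ⟨hadd_lo, hadd_hi⟩ := hsq (x + y) (by simp)
  obtain ⟨hsub_lo, hsub_hi⟩ := hsq (x - y) (by simp)
  rw [hadd] at hadd_lo hadd_hi
  rw [hsub] at hsub_lo hsub_hi
  rw [abs_le]
  constructor <;> linarith

theorem abs_inner_map_le_of_inner_eq_zero (T : E →ₗ[ℝ] F) {u w : ℝ} (hu : 0 ≤ u) {x y : E}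
    (hxy : ⟪x, y⟫ = 0)
    (hT : ∀ a b : ℝ, u * ‖a • x + b • y‖ ≤ ‖T (a • x + b • y)‖ ∧
      ‖T (a • x + b • y)‖ ≤ w * ‖a • x + b • y‖) :
    |⟪T x, T y⟫| ≤ (w ^ 2 - u ^ 2) / 2 * ‖x‖ * ‖y‖ := by
  rcases eq_or_ne x 0 with rfl | hx
  · simp
  rcases eq_or_ne y 0 with rfl | hy
  · simp
  have hunit (z : E) (hz : z ≠ 0) : ‖‖z‖⁻¹ • z‖ = 1 := by
    rw [norm_smul, norm_inv, norm_norm, inv_mul_cancel₀ (norm_ne_zero_iff.mpr hz)]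
  have hbound := abs_inner_map_le_of_orthonormal T hu (hunit x hx) (hunit y hy)
    (by rw [real_inner_smul_left, real_inner_smul_right, hxy, mul_zero, mul_zero])
    (by
      rintro v (rfl | rfl)
      · exact hT _ _
      · simpa [sub_eq_add_neg, ← neg_smul] using hT ‖x‖⁻¹ (-‖y‖⁻¹))
  have hscale : ⟪T x, T y⟫ = ‖x‖ * ‖y‖ * ⟪T (‖x‖⁻¹ • x), T (‖y‖⁻¹ • y)⟫ := by
    simp only [map_smul, real_inner_smul_left, real_inner_smul_right]
    field_simp
  rw [hscale, abs_mul, abs_of_nonneg (by positivity)]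
  calc ‖x‖ * ‖y‖ * |⟪T (‖x‖⁻¹ • x), T (‖y‖⁻¹ • y)⟫|
      ≤ ‖x‖ * ‖y‖ * ((w ^ 2 - u ^ 2) / 2) := by gcongr
    _ = (w ^ 2 - u ^ 2) / 2 * ‖x‖ * ‖y‖ := by ring

end RestrictedOrthogonality

section Coordinates

variable {k : ℕ}

theorem l0norm_add_le (x y : Fin k → ℝ) : l0norm (x + y) ≤ l0norm x + l0norm y := by
  unfold l0norm
  refine (Finset.card_le_card fun i hi => ?_).trans (Finset.card_union_le _ _)
  simp only [Finset.mem_filter, Finset.mem_univ, true_and, Finset.mem_union, Pi.add_apply] at hi ⊢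
  by_contra! h
  simp [h.1, h.2] at hi

theorem l0norm_smul_le (c : ℝ) (x : Fin k → ℝ) : l0norm (c • x) ≤ l0norm x := by
  unfold l0norm
  refine Finset.card_le_card fun i hi => ?_
  simp only [Finset.mem_filter, Finset.mem_univ, true_and, Pi.smul_apply, smul_eq_mul] at hi ⊢
  exact right_ne_zero_of_mul hi

theorem l0norm_smul_add_smul_le (a b : ℝ) (x y : Fin k → ℝ) :
    l0norm (a • x + b • y) ≤ l0norm x + l0norm y :=
  (l0norm_add_le _ _).trans (add_le_add (l0norm_smul_le _ _) (l0norm_smul_le _ _))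

theorem l2norm_eq_norm (x : Fin k → ℝ) : l2norm x = ‖WithLp.toLp 2 x‖ := by
  simp [l2norm, EuclideanSpace.norm_eq]

theorem sum_mul_eq_inner (x y : Fin k → ℝ) :
    ∑ i, x i * y i = ⟪WithLp.toLp 2 x, WithLp.toLp 2 y⟫ := by
  simp [PiLp.inner_apply, mul_comm]

theorem inner_toLp_eq_zero_of_disjoint {x y : Fin k → ℝ} (h : ∀ i, x i ≠ 0 → y i = 0) :
    ⟪WithLp.toLp 2 x, WithLp.toLp 2 y⟫ = 0 := by
  rw [← sum_mul_eq_inner]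
  refine Finset.sum_eq_zero fun i _ => ?_
  by_cases hx : x i = 0 <;> simp [hx, h]

end Coordinates

theorem stmt10_general (n m : ℕ) (A : Matrix (Fin n) (Fin m) ℝ) (t : ℕ)
    (u w : ℝ) (hu : 0 ≤ u)
    (hA : ∀ x : Fin m → ℝ, l0norm x ≤ 2 * t →
      u * l2norm x ≤ l2norm (A.mulVec x) ∧ l2norm (A.mulVec x) ≤ w * l2norm x) :
    ∀ z₁ z₂ : Fin m → ℝ, l0norm z₁ ≤ t → l0norm z₂ ≤ t →
      (∀ i : Fin m, z₁ i ≠ 0 → z₂ i = 0) →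
      |∑ j, (A.mulVec z₁) j * (A.mulVec z₂) j| ≤
        (w ^ 2 - u ^ 2) / 2 * l2norm z₁ * l2norm z₂ := by
  intro z₁ z₂ h₁ h₂ hdisj
  have hmap (x : Fin m → ℝ) :
      Matrix.toLpLin 2 2 A (WithLp.toLp 2 x) = WithLp.toLp 2 (A.mulVec x) := by
    simp [Matrix.toLpLin_apply]
  simp only [sum_mul_eq_inner, l2norm_eq_norm, ← hmap] at hA ⊢
  refine abs_inner_map_le_of_inner_eq_zero _ hu (inner_toLp_eq_zero_of_disjoint hdisj)
    fun a b => ?_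
  simpa using hA (a • z₁ + b • z₂) ((l0norm_smul_add_smul_le a b z₁ z₂).trans (by omega))

/-- Lemma 3: if `u ‖x‖₂ ≤ ‖A x‖₂ ≤ w ‖x‖₂` for all `x` with `‖x‖₀ ≤ 2t`
(`0 ≤ u ≤ w`, `t ≥ 1`), then for all `z₁, z₂` with `‖zᵢ‖₀ ≤ t` and disjoint supports,
`|⟨A z₁, A z₂⟩| ≤ ((w² − u²)/2) ‖z₁‖₂ ‖z₂‖₂`. -/
theorem stmt10 (n m : ℕ) (A : Matrix (Fin n) (Fin m) ℝ) (t : ℕ) (ht : 1 ≤ t)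
    (u w : ℝ) (hu : 0 ≤ u) (huw : u ≤ w)
    (hA : ∀ x : Fin m → ℝ, l0norm x ≤ 2 * t →
      u * l2norm x ≤ l2norm (A.mulVec x) ∧ l2norm (A.mulVec x) ≤ w * l2norm x) :
    ∀ z₁ z₂ : Fin m → ℝ, l0norm z₁ ≤ t → l0norm z₂ ≤ t →
      (∀ i : Fin m, z₁ i ≠ 0 → z₂ i = 0) →
      |∑ j, (A.mulVec z₁) j * (A.mulVec z₂) j| ≤
        (w ^ 2 - u ^ 2) / 2 * l2norm z₁ * l2norm z₂ :=
  stmt10_general n m A t u w hu hA
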